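/- arXiv:1207.6438 — 3 statements merged into one kernel-verified Lean document; each statement's English description precedes it below -/
import Mathlib

section
/- Let n ≥ 1 and k ≤ n, and let A and B be n×n positive semidefinite Hermitian complex matrices such that rank(A) ≤ k, every eigenvalue of A is at most c, and every eigenvalue of B is at most μ, where c ≥ 0 and μ ≥ 0 are real. Then det(A + B) ≤ (c + μ)^k · μ^{n−k}, where the determinant of the positive semidefinite matrix A+B is interpreted as a nonnegative real number. -/
/-!
In the Loewner order the eigenvalue bounds say `A ≤ c` and `B ≤ μ`, so every eigenvalue of
`A + B` is at most `c + μ`. Let the columns of `V` be the orthonormal eigenvectors of `A + B`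
whose eigenvalues `λᵢ` exceed `μ`. Then `Vᴴ A V = Vᴴ (A + B) V - Vᴴ B V ≥ diag (λᵢ - μ)` is positive
definite, so there are at most `rank A ≤ k` such eigenvalues, and the determinant, the product
of the eigenvalues, is at most `(c + μ) ^ k * μ ^ (n - k)`.
-/

open Matrix Finset
open scoped ComplexOrder MatrixOrder

lemma pow_mul_pow_sub_le_pow_mul_pow_sub {R : Type*} [CommSemiring R] [PartialOrder R]
    [IsOrderedRing R] {a b : R} (hb : 0 ≤ b) (hba : b ≤ a) {s k n : ℕ} (hsk : s ≤ k)
    (hkn : k ≤ n) : a ^ s * b ^ (n - s) ≤ a ^ k * b ^ (n - k) := by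
  have ha : 0 ≤ a := hb.trans hba
  calc a ^ s * b ^ (n - s) = a ^ s * b ^ (k - s) * b ^ (n - k) := by
        rw [mul_assoc, ← pow_add, add_comm, tsub_add_tsub_cancel hkn hsk]
    _ ≤ a ^ s * a ^ (k - s) * b ^ (n - k) := by gcongr
    _ = a ^ k * b ^ (n - k) := by rw [← pow_add, Nat.add_sub_cancel' hsk]

lemma prod_le_pow_mul_pow_of_card_lt_le {R ι : Type*} [CommSemiring R] [LinearOrder R]
    [IsOrderedRing R] [Fintype ι] {f : ι → R} {C μ : R} {k : ℕ}
    (hf₀ : ∀ i, 0 ≤ f i) (hfC : ∀ i, f i ≤ C) (hμ : 0 ≤ μ) (hμC : μ ≤ C)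
    (hcard : Fintype.card {i // μ < f i} ≤ k) (hk : k ≤ Fintype.card ι) :
    ∏ i, f i ≤ C ^ k * μ ^ (Fintype.card ι - k) := by
  classical
  set s := univ.filter (μ < f ·)
  have hs : #s = Fintype.card {i // μ < f i} := (Fintype.card_subtype _).symm
  have hsc : #(univ.filter fun i ↦ ¬ μ < f i) = Fintype.card ι - #s := by
    rw [← card_univ, ← card_filter_add_card_filter_not (s := univ) (μ < f ·),
      Nat.add_sub_cancel_left]
  calc ∏ i, f i = (∏ i ∈ s, f i) * ∏ i ∈ univ.filter (fun i ↦ ¬ μ < f i), f i :=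
        (prod_filter_mul_prod_filter_not univ _ f).symm
    _ ≤ C ^ #s * μ ^ (Fintype.card ι - #s) := by
        rw [← hsc, ← prod_const, ← prod_const]
        exact mul_le_mul (prod_le_prod (fun i _ ↦ hf₀ i) fun i _ ↦ hfC i)
          (prod_le_prod (fun i _ ↦ hf₀ i) fun i hi ↦ le_of_not_gt (mem_filter.mp hi).2)
          (prod_nonneg fun i _ ↦ hf₀ i) (prod_nonneg fun _ _ ↦ hμ.trans hμC)
    _ ≤ C ^ k * μ ^ (Fintype.card ι - k) :=
        pow_mul_pow_sub_le_pow_mul_pow_sub hμ hμC (hs ▸ hcard) hk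

namespace Matrix

variable {𝕜 m n : Type*} [RCLike 𝕜] [Fintype n]

lemma conjTranspose_submatrix_mul_mul_submatrix (U X : Matrix n n 𝕜) (s : m → n) :
    (U.submatrix id s)ᴴ * X * U.submatrix id s = (Uᴴ * X * U).submatrix s s := by
  rw [submatrix_mul _ _ _ id _ Function.bijective_id,
    submatrix_mul _ _ _ id _ Function.bijective_id, conjTranspose_submatrix, submatrix_id_id]

variable [DecidableEq n]

lemma IsHermitian.le_algebraMap_iff_eigenvalues_le {A : Matrix n n 𝕜} (hA : A.IsHermitian)
    (t : ℝ) : A ≤ algebraMap ℝ (Matrix n n 𝕜) t ↔ ∀ i, hA.eigenvalues i ≤ t := by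
  rw [le_algebraMap_iff_spectrum_le hA.isSelfAdjoint, hA.spectrum_real_eq_range_eigenvalues,
    Set.forall_mem_range]

lemma IsHermitian.card_lt_eigenvalues_add_le_rank {A B : Matrix n n 𝕜}
    (hAB : (A + B).IsHermitian) {μ : ℝ} (hB : B ≤ algebraMap ℝ (Matrix n n 𝕜) μ) :
    Fintype.card {i // μ < hAB.eigenvalues i} ≤ A.rank := by
  set S := {i // μ < hAB.eigenvalues i}
  set V := (hAB.eigenvectorUnitary : Matrix n n 𝕜).submatrix id (Subtype.val : S → n)
  have hV : Vᴴ * V = 1 := by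
    rw [← Matrix.mul_one Vᴴ, conjTranspose_submatrix_mul_mul_submatrix, Matrix.mul_one,
      ← star_eq_conjTranspose, Unitary.coe_star_mul_self, submatrix_one _ Subtype.val_injective]
  have hdiag : Vᴴ * (A + B) * V = diagonal fun i : S ↦ (hAB.eigenvalues i : 𝕜) := by
    rw [conjTranspose_submatrix_mul_mul_submatrix, ← star_eq_conjTranspose,
      ← Unitary.conjStarAlgAut_star_apply (S := 𝕜), hAB.conjStarAlgAut_star_eigenvectorUnitary,
      submatrix_diagonal _ _ Subtype.val_injective]
    rfl
  have hshift : diagonal (fun i : S ↦ ((hAB.eigenvalues i - μ : ℝ) : 𝕜)) =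
      Vᴴ * (A + B) * V - μ • 1 := by
    rw [hdiag]
    ext i j
    by_cases h : i = j <;> simp [h, sub_smul, Algebra.algebraMap_eq_smul_one]
  have hsplit : Vᴴ * A * V = diagonal (fun i : S ↦ ((hAB.eigenvalues i - μ : ℝ) : 𝕜)) +
      Vᴴ * (algebraMap ℝ (Matrix n n 𝕜) μ - B) * V := by
    rw [hshift, Matrix.mul_sub, Matrix.sub_mul, Algebra.algebraMap_eq_smul_one, Matrix.mul_smul,
      Matrix.smul_mul, Matrix.mul_one, hV, Matrix.mul_add, Matrix.add_mul]
    abel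
  have hpos : (Vᴴ * A * V).PosDef := by
    rw [hsplit]
    refine PosDef.add_posSemidef ?_ ((le_iff.mp hB).conjTranspose_mul_mul_same V)
    exact posDef_diagonal_iff.2 fun i ↦ by simpa using i.2
  calc Fintype.card S = (Vᴴ * A * V).rank := (rank_of_isUnit _ hpos.isUnit).symm
    _ ≤ (Vᴴ * A).rank := rank_mul_le_left _ _
    _ ≤ A.rank := rank_mul_le_right _ _

end Matrix

theorem det_add_le_of_rank_le_of_eigenvalues_le_general
    {n k : ℕ} (hk : k ≤ n)
    (A B : Matrix (Fin n) (Fin n) ℂ)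
    (hA : A.PosSemidef) (hB : B.PosSemidef)
    (c μ : ℝ) (hc : 0 ≤ c) (hμ : 0 ≤ μ)
    (hrank : A.rank ≤ k)
    (hAeig : ∀ i, hA.1.eigenvalues i ≤ c)
    (hBeig : ∀ i, hB.1.eigenvalues i ≤ μ) :
    ∃ d : ℝ, 0 ≤ d ∧ (A + B).det = (d : ℂ) ∧ d ≤ (c + μ) ^ k * μ ^ (n - k) := by
  have hAB := hA.add hB
  have hAc := (hA.1.le_algebraMap_iff_eigenvalues_le c).2 hAeig
  have hBμ := (hB.1.le_algebraMap_iff_eigenvalues_le μ).2 hBeig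
  have hABle : A + B ≤ algebraMap ℝ (Matrix (Fin n) (Fin n) ℂ) (c + μ) := by
    rw [map_add]
    exact add_le_add hAc hBμ
  have hupper := (hAB.1.le_algebraMap_iff_eigenvalues_le _).1 hABle
  have hcard := (hAB.1.card_lt_eigenvalues_add_le_rank hBμ).trans hrank
  refine ⟨∏ i, hAB.1.eigenvalues i, prod_nonneg fun i _ ↦ hAB.eigenvalues_nonneg i, ?_, ?_⟩
  · exact_mod_cast hAB.1.det_eq_prod_eigenvalues
  · simpa using prod_le_pow_mul_pow_of_card_lt_le hAB.eigenvalues_nonneg hupper hμ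
      (le_add_of_nonneg_left hc) hcard (by simpa using hk)

/-- Weyl-type determinant bound: if `A, B` are `n × n` positive semidefinite Hermitian
matrices, `rank A ≤ k`, the eigenvalues of `A` are at most `c` and those of `B` are at most
`μ`, then `det (A + B) ≤ (c + μ)^k * μ^(n-k)` (the determinant being a nonnegative real). -/
theorem det_add_le_of_rank_le_of_eigenvalues_le
    {n k : ℕ} (hn : 1 ≤ n) (hk : k ≤ n)
    (A B : Matrix (Fin n) (Fin n) ℂ)
    (hA : A.PosSemidef) (hB : B.PosSemidef)
    (c μ : ℝ) (hc : 0 ≤ c) (hμ : 0 ≤ μ)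
    (hrank : A.rank ≤ k)
    (hAeig : ∀ i, hA.1.eigenvalues i ≤ c)
    (hBeig : ∀ i, hB.1.eigenvalues i ≤ μ) :
    ∃ d : ℝ, 0 ≤ d ∧ (A + B).det = (d : ℂ) ∧ d ≤ (c + μ) ^ k * μ ^ (n - k) :=
  det_add_le_of_rank_le_of_eigenvalues_le_general hk A B hA hB c μ hc hμ hrank hAeig hBeig
end

section
/- Let N₁, N₂, T be positive integers with 2 ≤ N₂ ≤ N₁ and T ≥ 2N₁, regarded as real numbers. In the plane ℝ², define the points D₁ = (N₁(1−N₁/T), 0), D₂ = (0, N₂), and D₄ = ((N₂−1)(1−(N₂−1)/T), (N₂−1)/T). Then the convex hull of {(0,0), D₁, D₂, D₄} strictly contains the convex hull of {(0,0), D₁, D₂} if and only if (N₂ − (N₂−1)/T)/((N₂−1)(1−(N₂−1)/T)) < N₂/(N₁(1−N₁/T)). -/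
/-!
In the first quadrant the triangle with vertices `0`, `(a, 0)`, `(0, b)` is the region
`x / a + y / b ≤ 1`, so adding `D₄ = (c, d)` enlarges its convex hull exactly when
`1 < c / a + d / b`. Multiplying by `b / c > 0` turns this into `(b - d) / c < b / a`, which for
`a = N₁(1 - N₁/T)` and `b = N₂` is the stated criterion.
-/

open Set

theorem convexHull_ssubset_convexHull_insert_iff {𝕜 E : Type*} [Semiring 𝕜] [PartialOrder 𝕜]
    [AddCommMonoid E] [Module 𝕜 E] {s : Set E} {x : E} :
    convexHull 𝕜 (insert x s) ⊃ convexHull 𝕜 s ↔ x ∉ convexHull 𝕜 s := by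
  change convexHull 𝕜 s ⊂ _ ↔ _
  rw [ssubset_iff_subset_not_subset, (convex_convexHull 𝕜 s).convexHull_subset_iff,
    insert_subset_iff, and_iff_right (convexHull_mono (subset_insert x s))]
  simp [subset_convexHull]

theorem convexHull_right_triangle_eq {a b : ℝ} (ha : 0 < a) (hb : 0 < b) :
    convexHull ℝ {((0 : ℝ), (0 : ℝ)), (a, 0), (0, b)} =
      {p : ℝ × ℝ | 0 ≤ p.1 ∧ 0 ≤ p.2 ∧ p.1 / a + p.2 / b ≤ 1} := by
  apply Subset.antisymm
  · refine convexHull_min ?_ ?_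
    · rintro p (rfl | rfl | rfl) <;> simp [ha.le, hb.le, ha.ne', hb.ne']
    · rintro p ⟨hp₁, hp₂, hp⟩ q ⟨hq₁, hq₂, hq⟩ s t hs ht hst
      refine ⟨by simp only [Prod.fst_add, Prod.smul_fst, smul_eq_mul]; positivity,
        by simp only [Prod.snd_add, Prod.smul_snd, smul_eq_mul]; positivity, ?_⟩
      calc (s • p + t • q).1 / a + (s • p + t • q).2 / b
          = s * (p.1 / a + p.2 / b) + t * (q.1 / a + q.2 / b) := by
            simp only [Prod.fst_add, Prod.snd_add, Prod.smul_fst, Prod.smul_snd, smul_eq_mul]; ring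
        _ ≤ s * 1 + t * 1 := by gcongr
        _ = 1 := by rw [mul_one, mul_one, hst]
  · rintro ⟨x, y⟩ ⟨hx, hy, hxy⟩
    have hw : ∀ i ∈ Finset.univ, 0 ≤ ![1 - x / a - y / b, x / a, y / b] i := by
      simp [Fin.forall_fin_succ, le_sub_iff_add_le', hxy, div_nonneg, hx, hy, ha.le, hb.le]
    have hmem := (convex_convexHull ℝ {((0 : ℝ), (0 : ℝ)), (a, 0), (0, b)}).sum_mem
      (z := ![(0, 0), (a, 0), (0, b)]) hw
      (by
        simp only [Fin.sum_univ_three, Matrix.cons_val_zero, Matrix.cons_val_one, Matrix.cons_val]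
        ring)
      (by intro i _; fin_cases i <;> exact subset_convexHull ℝ _ (by simp))
    convert hmem using 1
    simp [Fin.sum_univ_three, ha.ne', hb.ne']

theorem one_lt_div_add_div_iff {a b c d : ℝ} (ha : 0 < a) (hb : 0 < b) (hc : 0 < c) :
    1 < c / a + d / b ↔ (b - d) / c < b / a := by
  rw [div_lt_div_iff₀ hc ha, div_add_div _ _ ha.ne' hb.ne', one_lt_div (by positivity)]
  constructor <;> intro h <;> linarith

theorem mul_one_sub_div_pos {x T : ℝ} (hx : 0 < x) (hxT : x < T) : 0 < x * (1 - x / T) :=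
  mul_pos hx (sub_pos.2 ((div_lt_one (hx.trans hxT)).2 hxT))

/-- Corollary 3: for `2 ≤ N₂ ≤ N₁` and `T ≥ 2N₁`, the Grassmannian superposition point
`D₄ = ((N₂-1)(1-(N₂-1)/T), (N₂-1)/T)` enlarges the orthogonal-transmission DoF region
(the convex hull of `(0,0)`, `D₁ = (N₁(1-N₁/T), 0)` and `D₂ = (0, N₂)`) if and only if
`(N₂-(N₂-1)/T)/((N₂-1)(1-(N₂-1)/T)) < N₂/(N₁(1-N₁/T))`. -/
theorem grassmannian_superposition_improves_iff
    (N₁ N₂ T : ℕ) (hN₂ : 2 ≤ N₂) (hN₂₁ : N₂ ≤ N₁) (hT : 2 * N₁ ≤ T) :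
    (convexHull ℝ {((0 : ℝ), (0 : ℝ)),
        ((N₁ : ℝ) * (1 - (N₁ : ℝ) / (T : ℝ)), (0 : ℝ)),
        ((0 : ℝ), (N₂ : ℝ)),
        (((N₂ : ℝ) - 1) * (1 - ((N₂ : ℝ) - 1) / (T : ℝ)), ((N₂ : ℝ) - 1) / (T : ℝ))}
      ⊃ convexHull ℝ {((0 : ℝ), (0 : ℝ)),
        ((N₁ : ℝ) * (1 - (N₁ : ℝ) / (T : ℝ)), (0 : ℝ)),
        ((0 : ℝ), (N₂ : ℝ))})
    ↔ ((N₂ : ℝ) - ((N₂ : ℝ) - 1) / (T : ℝ))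
          / (((N₂ : ℝ) - 1) * (1 - ((N₂ : ℝ) - 1) / (T : ℝ)))
        < (N₂ : ℝ) / ((N₁ : ℝ) * (1 - (N₁ : ℝ) / (T : ℝ))) := by
  have h₂ : (2 : ℝ) ≤ N₂ := by exact_mod_cast hN₂
  have h₂₁ : (N₂ : ℝ) ≤ N₁ := by exact_mod_cast hN₂₁
  have hT' : 2 * (N₁ : ℝ) ≤ T := by exact_mod_cast hT
  have ha : 0 < (N₁ : ℝ) * (1 - N₁ / T) := mul_one_sub_div_pos (by linarith) (by linarith)
  have hb : (0 : ℝ) < N₂ := by linarith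
  have hc : 0 < ((N₂ : ℝ) - 1) * (1 - (N₂ - 1) / T) :=
    mul_one_sub_div_pos (by linarith) (by linarith)
  have hd : 0 ≤ ((N₂ : ℝ) - 1) / T := div_nonneg (by linarith) (by linarith)
  -- `pair_comm` and `insert_comm` move `D₄` to the front of the vertex list.
  rw [← one_lt_div_add_div_iff ha hb hc, ← not_le, pair_comm, insert_comm _ (_, _ / _),
    insert_comm _ (_, _ / _), convexHull_ssubset_convexHull_insert_iff,
    convexHull_right_triangle_eq ha hb]
  simp [hc.le, hd]
end

section
/- Let N₁, N₂, T be positive integers with N₂ < N₁ and T ≥ 2N₁, regarded as real numbers. In the plane ℝ², define the points D₁ = (N₁(1−N₁/T), 0), D₂ = (0, N₂), and D₆ = (N₂(1−N₂/T), N₂²/T). Then the convex hull of {(0,0), D₁, D₂, D₆} strictly contains the convex hull of {(0,0), D₁, D₂} if and only if N₂ > N₁(1−N₁/T). -/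
/-- Corollary 5 (condition): for `N₂ < N₁` and `T ≥ 2N₁`, the Grassmannian-Euclidean
superposition point `D₆ = (N₂(1-N₂/T), N₂²/T)` enlarges the orthogonal-transmission DoF
region (the convex hull of `(0,0)`, `D₁ = (N₁(1-N₁/T), 0)` and `D₂ = (0, N₂)`) if and only
if `N₂ > N₁(1-N₁/T)`. -/
theorem grassmannian_euclidean_improves_iff
    (N₁ N₂ T : ℕ) (hN₂ : 0 < N₂) (hN₂₁ : N₂ < N₁) (hT : 2 * N₁ ≤ T) :
    (convexHull ℝ {((0 : ℝ), (0 : ℝ)),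
        ((N₁ : ℝ) * (1 - (N₁ : ℝ) / (T : ℝ)), (0 : ℝ)),
        ((0 : ℝ), (N₂ : ℝ)),
        ((N₂ : ℝ) * (1 - (N₂ : ℝ) / (T : ℝ)), (N₂ : ℝ) ^ 2 / (T : ℝ))}
      ⊃ convexHull ℝ {((0 : ℝ), (0 : ℝ)),
        ((N₁ : ℝ) * (1 - (N₁ : ℝ) / (T : ℝ)), (0 : ℝ)),
        ((0 : ℝ), (N₂ : ℝ))})
    ↔ (N₁ : ℝ) * (1 - (N₁ : ℝ) / (T : ℝ)) < (N₂ : ℝ) := by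
  have hT' : 2 * (N₁ : ℝ) ≤ (T : ℝ) := by exact_mod_cast hT
  have hn2 : (1 : ℝ) ≤ (N₂ : ℝ) := by exact_mod_cast hN₂
  have hn12 : (N₂ : ℝ) < (N₁ : ℝ) := by exact_mod_cast hN₂₁
  have ht0 : (0 : ℝ) < (T : ℝ) := by linarith
  have hdiv1 : (N₁ : ℝ) / (T : ℝ) ≤ 1 / 2 := by
    rw [div_le_div_iff₀ ht0 (by norm_num)]; linarith
  have ha0 : 0 < (N₁ : ℝ) * (1 - (N₁ : ℝ) / (T : ℝ)) := by
    apply mul_pos <;> linarith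
  have hdiv2 : (N₂ : ℝ) / (T : ℝ) < 1 / 2 := by
    rw [div_lt_div_iff₀ ht0 (by norm_num)]; linarith
  set a : ℝ := (N₁ : ℝ) * (1 - (N₁ : ℝ) / (T : ℝ)) with ha_def
  set b : ℝ := (N₂ : ℝ) * (1 - (N₂ : ℝ) / (T : ℝ)) with hb_def
  set c : ℝ := (N₂ : ℝ) ^ 2 / (T : ℝ) with hc_def
  constructor
  · -- forward, by contraposition
    intro hss
    by_contra hle
    push_neg at hle   -- hle : N₂ ≤ a
    apply hss.not_subset
    apply convexHull_min _ (convex_convexHull ℝ _)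
    intro p hp
    rcases hp with h | h | h | h
    · exact subset_convexHull ℝ _ (by simp [h])
    · exact subset_convexHull ℝ _ (by simp [h])
    · exact subset_convexHull ℝ _ (by simp [h])
    · -- p = D₆ ; express it as a convex combination
      subst h
      have hconv := convex_convexHull ℝ
        ({((0 : ℝ), (0 : ℝ)), (a, (0 : ℝ)), ((0 : ℝ), (N₂ : ℝ))} : Set (ℝ × ℝ))
      have hu0 : 0 ≤ b / a := by
        apply div_nonneg _ ha0.le
        apply mul_nonneg (by linarith) (by linarith)
      have hv0 : 0 ≤ (N₂ : ℝ) / (T : ℝ) := by positivity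
      have huv : b / a + (N₂ : ℝ) / (T : ℝ) ≤ 1 := by
        have hb' : b ≤ a * (1 - (N₂ : ℝ) / (T : ℝ)) := by
          rw [hb_def]
          exact mul_le_mul_of_nonneg_right hle (by linarith)
        have h2 : b / a ≤ 1 - (N₂ : ℝ) / (T : ℝ) := by
          rw [div_le_iff₀ ha0]; nlinarith
        linarith
      have key := hconv.sum_mem (t := (Finset.univ : Finset (Fin 3)))
          (w := ![1 - b / a - (N₂ : ℝ) / (T : ℝ), b / a, (N₂ : ℝ) / (T : ℝ)])
          (z := ![((0 : ℝ), (0 : ℝ)), (a, (0 : ℝ)), ((0 : ℝ), (N₂ : ℝ))])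
          (by
            intro i _
            fin_cases i <;> simp <;> linarith)
          (by simp [Fin.sum_univ_three]; ring)
          (by
            intro i _
            fin_cases i <;> exact subset_convexHull ℝ _ (by simp))
      convert key using 2 <;>
        simp only [Fin.sum_univ_three, Matrix.cons_val_zero, Matrix.cons_val_one,
          Matrix.head_cons, Matrix.cons_val_two, Matrix.tail_cons, Prod.smul_mk,
          Prod.mk_add_mk, smul_eq_mul]
      · rw [hb_def]
        field_simp
        ring
      · rw [hc_def]
        field_simp
        ring
  · -- backward
    intro hlt
    constructor
    · apply convexHull_mono
      intro x hx
      rcases hx with h | h | h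
      · exact Or.inl h
      · exact Or.inr (Or.inl h)
      · exact Or.inr (Or.inr (Or.inl h))
    · -- hull4 ⊄ hull3 since D₆ ∉ hull3
      intro hsub
      have hD6mem : ((b, c) : ℝ × ℝ) ∈ convexHull ℝ
          ({((0 : ℝ), (0 : ℝ)), (a, (0 : ℝ)), ((0 : ℝ), (N₂ : ℝ))} : Set (ℝ × ℝ)) := by
        apply hsub
        exact subset_convexHull ℝ _ (by simp)
      -- separating halfplane
      have hlin : IsLinearMap ℝ (fun p : ℝ × ℝ => p.1 * (N₂ : ℝ) + p.2 * a) := by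
        constructor
        · intro x y; simp [Prod.fst_add, Prod.snd_add]; ring
        · intro r x; simp [smul_eq_mul]; ring
      have hhalf : convexHull ℝ
          ({((0 : ℝ), (0 : ℝ)), (a, (0 : ℝ)), ((0 : ℝ), (N₂ : ℝ))} : Set (ℝ × ℝ))
          ⊆ {p : ℝ × ℝ | p.1 * (N₂ : ℝ) + p.2 * a ≤ a * (N₂ : ℝ)} := by
        apply convexHull_min _ (convex_halfSpace_le hlin _)
        intro p hp
        rcases hp with h | h | h <;> subst h <;> simp [mul_comm] <;> positivity
      have hviol : a * (N₂ : ℝ) < b * (N₂ : ℝ) + c * a := by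
        have key : b * (N₂ : ℝ) + c * a - a * (N₂ : ℝ)
            = ((N₂ : ℝ) - a) * (N₂ : ℝ) * (1 - (N₂ : ℝ) / (T : ℝ)) := by
          rw [hb_def, hc_def]; field_simp; ring
        nlinarith [mul_pos (mul_pos (sub_pos.2 hlt) (by linarith : (0:ℝ) < (N₂:ℝ)))
          (by linarith : (0:ℝ) < 1 - (N₂ : ℝ) / (T : ℝ))]
      have := hhalf hD6mem
      simp only [Set.mem_setOf_eq] at this
      linarith
end
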